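/- Andreief's identity: for integrable functions φ_1,…,φ_n and ψ_1,…,ψ_n on a measure space (X,μ) with all products φ_iψ_j integrable, one has ∫_{X^n} det(φ_i(x_j))·det(ψ_i(x_j)) dμ(x_1)⋯dμ(x_n) = n!·det(∫_X φ_i(x)ψ_j(x) dμ(x)). -/

import Mathlib

/-!
Expanding both determinants by the Leibniz formula turns the integrand into
`∑_{σ,τ} sign σ sign τ ∏_j φ_{σ j}(x_j) ψ_{τ j}(x_j)`, and by Fubini each term integrates to
`sign σ sign τ ∏_j G_{σ j, τ j}`, where `G_{ij} = ∫ φ_i ψ_j dμ`. For fixed `σ`, the sum over `τ` is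
`sign σ ⬝ det` of `G` with rows permuted by `σ`, i.e. `det G`; summing over the `n!` choices of `σ`
gives the result.
-/

open MeasureTheory Equiv

namespace Matrix

variable {ι R : Type*} [Fintype ι] [DecidableEq ι] [CommRing R]

theorem det_mul_det_eq_sum_sum_sign_mul_prod (M N : Matrix ι ι R) :
    M.det * N.det = ∑ σ : Perm ι, ∑ τ : Perm ι,
      ((Perm.sign σ * Perm.sign τ : ℤˣ) : R) * ∏ j, M (σ j) j * N (τ j) j := by
  rw [det_apply', det_apply', Finset.sum_mul_sum]
  refine Finset.sum_congr rfl fun σ _ => Finset.sum_congr rfl fun τ _ => ?_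
  push_cast
  rw [Finset.prod_mul_distrib]
  ring

theorem sum_sign_mul_prod_perm_eq_det (A : Matrix ι ι R) (σ : Perm ι) :
    ∑ τ : Perm ι, ((Perm.sign σ * Perm.sign τ : ℤˣ) : R) * ∏ j, A (σ j) (τ j) = A.det := by
  have hrows : ∑ τ : Perm ι, (Perm.sign τ : R) * ∏ j, A (σ j) (τ j) = Perm.sign σ * A.det := by
    rw [← det_permute, ← det_transpose, det_apply']
    rfl
  have hsq : (Perm.sign σ : R) * Perm.sign σ = 1 := by
    rw [← Int.cast_mul, ← Units.val_mul, Int.units_mul_self, Units.val_one, Int.cast_one]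
  simp_rw [Units.val_mul, Int.cast_mul, mul_assoc, ← Finset.mul_sum, hrows, ← mul_assoc, hsq,
    one_mul]

theorem sum_sum_sign_mul_prod_perm_eq_factorial_mul_det (A : Matrix ι ι R) :
    ∑ σ : Perm ι, ∑ τ : Perm ι, ((Perm.sign σ * Perm.sign τ : ℤˣ) : R) * ∏ j, A (σ j) (τ j)
      = (Fintype.card ι).factorial * A.det := by
  simp_rw [sum_sign_mul_prod_perm_eq_det, Finset.sum_const, Finset.card_univ, Fintype.card_perm,
    nsmul_eq_mul]

end Matrix

theorem andreief_general {X : Type*} [MeasurableSpace X] (μ : Measure X) [SigmaFinite μ]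
    (n : ℕ) (φ ψ : Fin n → X → ℂ)
    (hφψ : ∀ i j, Integrable (fun x => φ i x * ψ j x) μ) :
    ∫ x : Fin n → X,
        (Matrix.det (Matrix.of fun i j : Fin n => φ i (x j))) *
          (Matrix.det (Matrix.of fun i j : Fin n => ψ i (x j)))
        ∂(Measure.pi fun _ => μ)
      = (Nat.factorial n : ℂ) *
        Matrix.det (Matrix.of fun i j : Fin n => ∫ x, φ i x * ψ j x ∂μ) := by
  have hterm (σ τ : Perm (Fin n)) :
      Integrable (fun x : Fin n → X => ∏ j, φ (σ j) (x j) * ψ (τ j) (x j))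
        (Measure.pi fun _ => μ) :=
    Integrable.fintype_prod (f := fun j y => φ (σ j) y * ψ (τ j) y) fun j => hφψ (σ j) (τ j)
  have hgram := Matrix.sum_sum_sign_mul_prod_perm_eq_factorial_mul_det
    (Matrix.of fun i j : Fin n => ∫ x, φ i x * ψ j x ∂μ)
  rw [Fintype.card_fin] at hgram
  simp_rw [Matrix.det_mul_det_eq_sum_sum_sign_mul_prod, Matrix.of_apply] at hgram ⊢
  rw [← hgram,
    integral_finsetSum _ fun σ _ => integrable_finsetSum _ fun τ _ => (hterm σ τ).const_mul _]
  refine Finset.sum_congr rfl fun σ _ => ?_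
  rw [integral_finsetSum _ fun τ _ => (hterm σ τ).const_mul _]
  refine Finset.sum_congr rfl fun τ _ => ?_
  rw [integral_const_mul, integral_fintype_prod_eq_prod (fun j y => φ (σ j) y * ψ (τ j) y)]

/-- Andreief's identity: for integrable functions `φ_1, …, φ_n` and `ψ_1, …, ψ_n` on a σ-finite
measure space `(X, μ)` with all products `φ_i ψ_j` integrable,
`∫_{X^n} det(φ_i(x_j)) ⬝ det(ψ_i(x_j)) dμ^n = n! ⬝ det (∫_X φ_i ψ_j dμ)`. -/
theorem andreief {X : Type*} [MeasurableSpace X] (μ : Measure X) [SigmaFinite μ]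
    (n : ℕ) (φ ψ : Fin n → X → ℂ)
    (hφ : ∀ i, Integrable (φ i) μ) (hψ : ∀ i, Integrable (ψ i) μ)
    (hφψ : ∀ i j, Integrable (fun x => φ i x * ψ j x) μ) :
    ∫ x : Fin n → X,
        (Matrix.det (Matrix.of fun i j : Fin n => φ i (x j))) *
          (Matrix.det (Matrix.of fun i j : Fin n => ψ i (x j)))
        ∂(Measure.pi fun _ => μ)
      = (Nat.factorial n : ℂ) *
        Matrix.det (Matrix.of fun i j : Fin n => ∫ x, φ i x * ψ j x ∂μ) :=
  andreief_general μ n φ ψ hφψ
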